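/- Let (A,C)_ψ be a factorisable entwining structure, B = C^{*op} the opposite of the dual convolution algebra, and ψ̄ : A ⊗ C* → C* ⊗ A the associated factorisation map. Then B ⊗ A with product (b ⊗ a)(b' ⊗ a') = b·ψ̄(a ⊗ b')·a' (i.e., b b'_i ⊗ a^i a' where ψ̄(a⊗b') = b'_i ⊗ a^i) is an associative unital k-algebra with unit ε ⊗ 1_A. -/

import Mathlib

open TensorProduct LinearMap

noncomputable section

variable (k A C : Type*) [CommRing k] [Ring A] [Algebra k A]
  [AddCommGroup C] [Module k C] [Coalgebra k C]

/-- An entwining structure `(A,C)_ψ` over `k`. -/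
structure Entwining where
  psi : C ⊗[k] A →ₗ[k] A ⊗[k] C
  mul_compat :
    psi ∘ₗ lTensor C (LinearMap.mul' k A)
      = rTensor C (LinearMap.mul' k A)
        ∘ₗ (TensorProduct.assoc k A A C).symm.toLinearMap
        ∘ₗ lTensor A psi
        ∘ₗ (TensorProduct.assoc k A C A).toLinearMap
        ∘ₗ rTensor A psi
        ∘ₗ (TensorProduct.assoc k C A A).symm.toLinearMap
  one_compat : ∀ c : C, psi (c ⊗ₜ[k] (1 : A)) = (1 : A) ⊗ₜ[k] c
  comul_compat :
    lTensor A (Coalgebra.comul (R := k) (A := C)) ∘ₗ psi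
      = (TensorProduct.assoc k A C C).toLinearMap
        ∘ₗ rTensor C psi
        ∘ₗ (TensorProduct.assoc k C A C).symm.toLinearMap
        ∘ₗ lTensor C psi
        ∘ₗ (TensorProduct.assoc k C C A).toLinearMap
        ∘ₗ rTensor A (Coalgebra.comul (R := k) (A := C))
  counit_compat : ∀ (c : C) (a : A),
    (TensorProduct.rid k A)
        ((lTensor A (Coalgebra.counit (R := k) (A := C))) (psi (c ⊗ₜ[k] a)))
      = Coalgebra.counit (R := k) c • a

variable {k A C} in
/-- Evaluation of the first (dual) factor at `c`: `ξ ⊗ a ↦ ξ(c) • a`. -/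
def evFst (c : C) : Module.Dual k C ⊗[k] A →ₗ[k] A :=
  TensorProduct.lift ((LinearMap.lsmul k A) ∘ₗ
    (LinearMap.applyₗ (R := k) c : (C →ₗ[k] k) →ₗ[k] k))

variable {k A C} in
/-- Evaluation of the second (coalgebra) factor against `ξ`: `a ⊗ c ↦ ξ(c) • a`. -/
def evSnd (ξ : Module.Dual k C) : A ⊗[k] C →ₗ[k] A :=
  (TensorProduct.rid k A).toLinearMap ∘ₗ lTensor A ξ

variable {k A C} in
/-- `ψ̄ : A ⊗ C* → C* ⊗ A` is a factorisation map for the entwining `ψ`: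
`⟨c^α, ξ⟩ a_α = ξ_i(c) a^i`. -/
def IsFactorisation (E : Entwining k A C)
    (ψbar : A ⊗[k] Module.Dual k C →ₗ[k] Module.Dual k C ⊗[k] A) : Prop :=
  ∀ (a : A) (ξ : Module.Dual k C) (c : C),
    evFst c (ψbar (a ⊗ₜ[k] ξ)) = evSnd ξ (E.psi (c ⊗ₜ[k] a))

/-- The product of `B = C^{*op}`, i.e. the opposite convolution product:
`⟨c, b b'⟩ = ⟨c₍₂₎, b⟩ ⟨c₍₁₎, b'⟩`, as a linear map `B ⊗ B →ₗ B`. -/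
def opConv : Module.Dual k C ⊗[k] Module.Dual k C →ₗ[k] Module.Dual k C :=
  ((LinearMap.llcomp k C (C ⊗[k] C) k).flip (Coalgebra.comul (R := k) (A := C)))
  ∘ₗ (LinearMap.llcomp k (C ⊗[k] C) (k ⊗[k] k) k (LinearMap.mul' k k))
  ∘ₗ TensorProduct.homTensorHomMap (RingHom.id k) C C k k
  ∘ₗ (TensorProduct.comm k (Module.Dual k C) (Module.Dual k C)).toLinearMap

variable {k A C} in
/-- The multiplication of the smash product `B #_ψ̄ A` on `B ⊗ A`, `B = C^{*op}`:
`(b ⊗ a)(b' ⊗ a') = b ψ̄(a ⊗ b') a'`. -/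
def smashMul (ψbar : A ⊗[k] Module.Dual k C →ₗ[k] Module.Dual k C ⊗[k] A) :
    (Module.Dual k C ⊗[k] A) ⊗[k] (Module.Dual k C ⊗[k] A) →ₗ[k]
      Module.Dual k C ⊗[k] A :=
  rTensor A (opConv k C)
  ∘ₗ (TensorProduct.assoc k (Module.Dual k C) (Module.Dual k C) A).symm.toLinearMap
  ∘ₗ lTensor (Module.Dual k C) (lTensor (Module.Dual k C) (LinearMap.mul' k A))
  ∘ₗ lTensor (Module.Dual k C) (TensorProduct.assoc k (Module.Dual k C) A A).toLinearMap
  ∘ₗ lTensor (Module.Dual k C) (rTensor A ψbar)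
  ∘ₗ lTensor (Module.Dual k C) (TensorProduct.assoc k A (Module.Dual k C) A).symm.toLinearMap
  ∘ₗ (TensorProduct.assoc k (Module.Dual k C) A (Module.Dual k C ⊗[k] A)).toLinearMap

/-- The unit `ε ⊗ 1_A` of the smash product. -/
def smashOne : Module.Dual k C ⊗[k] A :=
  (Coalgebra.counit (R := k) (A := C)) ⊗ₜ[k] (1 : A)

/-!
Since `C` is finite projective, evaluation in the first factor identifies `C* ⊗ A` with
`Hom(C, A)`. The factorisation property says precisely that under this identification the smash
product becomes the `ψ`-twisted convolution `(f ∗ g)(c) = f(c₍₂₎)_α g(c₍₁₎^α)`, which is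
associative by the multiplicativity and comultiplicativity of `ψ` together with coassociativity.
The unit laws come down to `ψ̄(1 ⊗ ξ) = ξ ⊗ 1` and `ψ̄(a ⊗ ε) = ε ⊗ a`, the images of the unit
and counit axioms of `ψ`.
-/

variable {k A C}

lemma lTensor_lTensor_comp_assoc_comp_rTensor {M N P Q R S : Type*}
    [AddCommGroup M] [AddCommGroup N] [AddCommGroup P] [AddCommGroup Q] [AddCommGroup R]
    [AddCommGroup S] [Module k M] [Module k N] [Module k P] [Module k Q] [Module k R] [Module k S]
    (φ : M ⊗[k] N →ₗ[k] P ⊗[k] Q) (f : R →ₗ[k] S) :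
    lTensor P (lTensor Q f) ∘ₗ (TensorProduct.assoc k P Q R).toLinearMap ∘ₗ rTensor R φ
        ∘ₗ (TensorProduct.assoc k M N R).symm.toLinearMap
      = (TensorProduct.assoc k P Q S).toLinearMap ∘ₗ rTensor S φ
        ∘ₗ (TensorProduct.assoc k M N S).symm.toLinearMap ∘ₗ lTensor M (lTensor N f) := by
  refine TensorProduct.ext_threefold' fun m n r => ?_
  simp only [coe_comp, LinearEquiv.coe_coe, Function.comp_apply, lTensor_tmul,
    TensorProduct.assoc_symm_tmul, rTensor_tmul]
  induction φ (m ⊗ₜ n) using TensorProduct.induction_on with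
  | zero => simp
  | tmul p q => simp
  | add t t' ht ht' => simp only [TensorProduct.add_tmul, map_add, ht, ht']

namespace Entwining

variable (E : Entwining k A C)

/-- `c ⊗ a ↦ a_α g(c^α)`. -/
def twistMul (g : C →ₗ[k] A) : C ⊗[k] A →ₗ[k] A :=
  mul' k A ∘ₗ lTensor A g ∘ₗ E.psi

lemma twistMul_comp_lTensor_mul' (g : C →ₗ[k] A) :
    E.twistMul g ∘ₗ lTensor C (mul' k A)
      = mul' k A ∘ₗ lTensor A (E.twistMul g) ∘ₗ (TensorProduct.assoc k A C A).toLinearMap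
        ∘ₗ rTensor A E.psi ∘ₗ (TensorProduct.assoc k C A A).symm.toLinearMap := by
  simp only [twistMul, comp_assoc, E.mul_compat, lTensor_comp]
  simp only [← comp_assoc]
  congr 4
  ext a b c
  simp [mul_assoc]

/-- The `ψ`-twisted convolution product `(f ∗ g)(c) = f(c₍₂₎)_α g(c₍₁₎^α)` on `C →ₗ[k] A`. -/
def conv : (C →ₗ[k] A) →ₗ[k] (C →ₗ[k] A) →ₗ[k] C →ₗ[k] A :=
  LinearMap.mk₂ k (fun f g => E.twistMul g ∘ₗ lTensor C f ∘ₗ Coalgebra.comul)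
    (fun f f' g => by simp only [lTensor_add, add_comp, comp_add])
    (fun r f g => by simp only [lTensor_smul, smul_comp, comp_smul])
    (fun f g g' => by simp only [twistMul, lTensor_add, add_comp, comp_add])
    (fun r f g => by simp only [twistMul, lTensor_smul, smul_comp, comp_smul])

lemma conv_apply (f g : C →ₗ[k] A) :
    E.conv f g = E.twistMul g ∘ₗ lTensor C f ∘ₗ Coalgebra.comul := rfl

lemma twistMul_conv (f g : C →ₗ[k] A) :
    E.twistMul (E.conv f g)
      = E.twistMul g ∘ₗ lTensor C (E.twistMul f) ∘ₗ (TensorProduct.assoc k C C A).toLinearMap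
        ∘ₗ rTensor A Coalgebra.comul := by
  conv_rhs => rw [twistMul.eq_1 E f, lTensor_comp, lTensor_comp]
  simp only [← comp_assoc, twistMul_comp_lTensor_mul']
  rw [twistMul.eq_1 E (E.conv f g), conv_apply, lTensor_comp, lTensor_comp]
  simp only [comp_assoc, E.comul_compat]
  simp only [← comp_assoc]
  congr 3
  simp only [comp_assoc]
  congr 2
  exact lTensor_lTensor_comp_assoc_comp_rTensor E.psi f

lemma conv_assoc (f g h : C →ₗ[k] A) : E.conv (E.conv f g) h = E.conv f (E.conv g h) := by
  rw [conv_apply E (E.conv f g), conv_apply E f (E.conv g h), twistMul_conv, conv_apply,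
    lTensor_comp, lTensor_comp]
  simp only [comp_assoc]
  congr 2
  rw [← Coalgebra.coassoc]
  simp only [← comp_assoc, rTensor_comp_lTensor, ← lTensor_comp_rTensor]
  congr 2
  exact TensorProduct.ext_threefold fun _ _ _ => rfl

lemma twistMul_dualTensorHom_tmul (b : Module.Dual k C) (a : A) (t : C ⊗[k] A) :
    E.twistMul (dualTensorHom k C A (b ⊗ₜ a)) t = evSnd b (E.psi t) * a := by
  rw [twistMul, comp_apply, comp_apply]
  induction E.psi t using TensorProduct.induction_on with
  | zero => simp
  | tmul x y => simp [evSnd]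
  | add t t' ht ht' => simp_all [add_mul]

end Entwining

/-- The left hit action `b ⇀ c = c₍₁₎ b(c₍₂₎)` of `C*` on `C`. -/
def leftHit (b : Module.Dual k C) : C →ₗ[k] C :=
  (TensorProduct.rid k C).toLinearMap ∘ₗ lTensor C b ∘ₗ Coalgebra.comul

lemma opConv_tmul_apply (b ξ : Module.Dual k C) (c : C) :
    opConv k C (b ⊗ₜ ξ) c = ξ (leftHit b c) := by
  have h : opConv k C (b ⊗ₜ ξ) c = mul' k k (map ξ b (Coalgebra.comul c)) := by simp [opConv]
  rw [h, leftHit, comp_apply, comp_apply]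
  generalize Coalgebra.comul (R := k) c = z
  induction z using TensorProduct.induction_on with
  | zero => simp
  | tmul x y => simp [mul_comm]
  | add z z' hz hz' => simp_all

lemma leftHit_counit : leftHit (Coalgebra.counit (R := k) (A := C)) = LinearMap.id := by
  ext c
  simp [leftHit]

lemma counit_comp_leftHit (b : Module.Dual k C) :
    Coalgebra.counit ∘ₗ leftHit b = b := by
  ext c
  have hc : c = TensorProduct.lid k C (rTensor C Coalgebra.counit (Coalgebra.comul c)) := by simp
  conv_rhs => rw [hc]
  rw [leftHit, comp_apply, comp_apply, comp_apply]
  generalize Coalgebra.comul (R := k) c = z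
  induction z using TensorProduct.induction_on with
  | zero => simp
  | tmul x y => simp [mul_comm]
  | add z z' hz hz' => simp_all

lemma opConv_counit_tmul (b : Module.Dual k C) : opConv k C (Coalgebra.counit ⊗ₜ b) = b := by
  ext c
  rw [opConv_tmul_apply, leftHit_counit, id_apply]

lemma opConv_tmul_counit (b : Module.Dual k C) : opConv k C (b ⊗ₜ Coalgebra.counit) = b := by
  ext c
  rw [opConv_tmul_apply, ← comp_apply, counit_comp_leftHit]

lemma lTensor_dualTensorHom_tmul_comul (b : Module.Dual k C) (a : A) (c : C) :
    lTensor C (dualTensorHom k C A (b ⊗ₜ a)) (Coalgebra.comul c) = leftHit b c ⊗ₜ a := by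
  rw [leftHit, comp_apply, comp_apply]
  generalize Coalgebra.comul (R := k) c = z
  induction z using TensorProduct.induction_on with
  | zero => simp
  | tmul x y => simp [TensorProduct.smul_tmul]
  | add z z' hz hz' => simp_all [TensorProduct.add_tmul]

lemma smashMul_tmul (ψbar : A ⊗[k] Module.Dual k C →ₗ[k] Module.Dual k C ⊗[k] A)
    (b b' : Module.Dual k C) (a a' : A) :
    smashMul ψbar ((b ⊗ₜ a) ⊗ₜ (b' ⊗ₜ a'))
      = map (opConv k C ∘ₗ TensorProduct.mk k _ _ b) (mulRight k a') (ψbar (a ⊗ₜ b')) := by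
  simp only [smashMul, coe_comp, LinearEquiv.coe_coe, Function.comp_apply,
    TensorProduct.assoc_tmul, TensorProduct.assoc_symm_tmul, lTensor_tmul, rTensor_tmul]
  generalize ψbar (a ⊗ₜ b') = t
  induction t using TensorProduct.induction_on with
  | zero => simp
  | tmul ξ x => simp
  | add t t' ht ht' => simp_all [TensorProduct.add_tmul, TensorProduct.tmul_add]

lemma dualTensorHom_map_opConv_mulRight (b : Module.Dual k C) (a' : A)
    (t : Module.Dual k C ⊗[k] A) (c : C) :
    dualTensorHom k C A (map (opConv k C ∘ₗ TensorProduct.mk k _ _ b) (mulRight k a') t) c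
      = dualTensorHom k C A t (leftHit b c) * a' := by
  induction t using TensorProduct.induction_on with
  | zero => simp
  | tmul ξ x => simp [opConv_tmul_apply]
  | add t t' ht ht' => simp_all [add_mul]

namespace IsFactorisation

variable {E : Entwining k A C} {ψbar : A ⊗[k] Module.Dual k C →ₗ[k] Module.Dual k C ⊗[k] A}

lemma dualTensorHom_apply_eq (h : IsFactorisation E ψbar) (a : A) (ξ : Module.Dual k C) (c : C) :
    dualTensorHom k C A (ψbar (a ⊗ₜ ξ)) c = evSnd ξ (E.psi (c ⊗ₜ a)) := by
  rw [← h a ξ c]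
  induction ψbar (a ⊗ₜ ξ) using TensorProduct.induction_on with
  | zero => simp
  | tmul η x => simp [evFst]
  | add t t' ht ht' => simp_all

lemma dualTensorHom_comp_smashMul (h : IsFactorisation E ψbar) :
    dualTensorHom k C A ∘ₗ smashMul ψbar
      = lift (E.conv.compl₁₂ (dualTensorHom k C A) (dualTensorHom k C A)) := by
  ext b a b' a' c
  simp only [AlgebraTensorModule.curry_apply, curry_apply, restrictScalars_apply, coe_comp,
    Function.comp_apply, smashMul_tmul, dualTensorHom_map_opConv_mulRight,
    h.dualTensorHom_apply_eq, lift.tmul, compl₁₂_apply, E.conv_apply,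
    lTensor_dualTensorHom_tmul_comul, E.twistMul_dualTensorHom_tmul]

lemma dualTensorHom_smashMul (h : IsFactorisation E ψbar) (x y : Module.Dual k C ⊗[k] A) :
    dualTensorHom k C A (smashMul ψbar (x ⊗ₜ y))
      = E.conv (dualTensorHom k C A x) (dualTensorHom k C A y) :=
  LinearMap.congr_fun h.dualTensorHom_comp_smashMul (x ⊗ₜ y)

variable [Module.Finite k C] [Module.Projective k C]

lemma one_tmul (h : IsFactorisation E ψbar) (ξ : Module.Dual k C) :
    ψbar (1 ⊗ₜ ξ) = ξ ⊗ₜ 1 := by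
  refine dualTensorHom_bijective.injective (LinearMap.ext fun c => ?_)
  simp [h.dualTensorHom_apply_eq, E.one_compat, evSnd]

lemma tmul_counit (h : IsFactorisation E ψbar) (a : A) :
    ψbar (a ⊗ₜ Coalgebra.counit) = Coalgebra.counit ⊗ₜ a := by
  refine dualTensorHom_bijective.injective (LinearMap.ext fun c => ?_)
  rw [h.dualTensorHom_apply_eq, evSnd, comp_apply, LinearEquiv.coe_coe, E.counit_compat,
    dualTensorHom_apply]

lemma smashMul_assoc (h : IsFactorisation E ψbar) :
    smashMul ψbar ∘ₗ rTensor (Module.Dual k C ⊗[k] A) (smashMul ψbar)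
      = smashMul ψbar ∘ₗ lTensor (Module.Dual k C ⊗[k] A) (smashMul ψbar)
        ∘ₗ (TensorProduct.assoc k (Module.Dual k C ⊗[k] A)
            (Module.Dual k C ⊗[k] A) (Module.Dual k C ⊗[k] A)).toLinearMap := by
  refine TensorProduct.ext_threefold fun x y z => dualTensorHom_bijective.injective ?_
  simp only [coe_comp, Function.comp_apply, rTensor_tmul, lTensor_tmul, LinearEquiv.coe_coe,
    TensorProduct.assoc_tmul, h.dualTensorHom_smashMul, E.conv_assoc]

lemma smashOne_smashMul (h : IsFactorisation E ψbar) (x : Module.Dual k C ⊗[k] A) :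
    smashMul ψbar (smashOne k A C ⊗ₜ x) = x := by
  induction x using TensorProduct.induction_on with
  | zero => simp
  | tmul b a => simp [smashOne, smashMul_tmul, h.one_tmul, opConv_counit_tmul]
  | add x x' hx hx' => simp_all [TensorProduct.tmul_add]

lemma smashMul_smashOne (h : IsFactorisation E ψbar) (x : Module.Dual k C ⊗[k] A) :
    smashMul ψbar (x ⊗ₜ smashOne k A C) = x := by
  induction x using TensorProduct.induction_on with
  | zero => simp
  | tmul b a => simp [smashOne, smashMul_tmul, h.tmul_counit, opConv_tmul_counit]
  | add x x' hx hx' => simp_all [TensorProduct.add_tmul]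

end IsFactorisation

theorem smash_assoc_unital [Module.Finite k C] [Module.Projective k C]
    (E : Entwining k A C)
    (ψbar : A ⊗[k] Module.Dual k C →ₗ[k] Module.Dual k C ⊗[k] A)
    (hfact : IsFactorisation E ψbar) :
    -- associativity
    (smashMul ψbar ∘ₗ rTensor (Module.Dual k C ⊗[k] A) (smashMul ψbar)
      = smashMul ψbar ∘ₗ lTensor (Module.Dual k C ⊗[k] A) (smashMul ψbar)
        ∘ₗ (TensorProduct.assoc k (Module.Dual k C ⊗[k] A)
            (Module.Dual k C ⊗[k] A) (Module.Dual k C ⊗[k] A)).toLinearMap) ∧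
    -- `ε ⊗ 1` is a left and right unit
    (∀ x : Module.Dual k C ⊗[k] A,
      smashMul ψbar (smashOne k A C ⊗ₜ[k] x) = x ∧
      smashMul ψbar (x ⊗ₜ[k] smashOne k A C) = x) :=
  ⟨hfact.smashMul_assoc, fun x => ⟨hfact.smashOne_smashMul x, hfact.smashMul_smashOne x⟩⟩
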